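/- arXiv:2209.14336 — 2 statements merged into one kernel-verified Lean document; each statement's English description precedes it below -/
import Mathlib

section
/- Let U ⊆ ℂ be open, g : U → ℂ holomorphic with g'(z) ≠ 0 for all z ∈ U, and h : U → ℝ continuously differentiable. Set T = 1+|g|², L = 4|g'|²/T², Y = (2g/T, (2−T)/T) : U → ℂ × ℝ ≅ ℝ³, and define η = (h_{,1} Y_{,1} + h_{,2} Y_{,2})/L + hY (that is, η = ∇_L h + hY, where ∇_L h is the gradient of h with respect to the metric L δ_{ij} pushed into ℝ³). Then η equals the explicit expression η = ( (T/2)(∇h/|g'|²) g' − g ⟨∇h, g/g'⟩ + (2h/T) g , ((2−T)/T) h − ⟨∇h, g/g'⟩ ), where ∇h denotes the complex number h_{,1} + i h_{,2}, the products (∇h)g' and so on are complex multiplications, and ⟨w₁,w₂⟩ = Re(w̄₁ w₂). -/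
open Complex

noncomputable section

/-- Euclidean inner product on ℂ ≅ ℝ²: ⟨w₁,w₂⟩ = Re(w̄₁ w₂). -/
def inn (w₁ w₂ : ℂ) : ℝ := ((starRingEnd ℂ) w₁ * w₂).re

/-- Partial derivative in u (z = u + iv). -/
def pd1 (f : ℂ → ℝ) (z : ℂ) : ℝ := fderiv ℝ f z 1
/-- Partial derivative in v (z = u + iv). -/
def pd2 (f : ℂ → ℝ) (z : ℂ) : ℝ := fderiv ℝ f z Complex.I
/-- Euclidean Laplacian Δf = f_{,11} + f_{,22}. -/
def lap (f : ℂ → ℝ) (z : ℂ) : ℝ := pd1 (pd1 f) z + pd2 (pd2 f) z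

/-- Partial derivative in u of an ℝ³ ≅ ℂ × ℝ valued map. -/
def pdv1 (f : ℂ → ℂ × ℝ) (z : ℂ) : ℂ × ℝ := fderiv ℝ f z 1
/-- Partial derivative in v of an ℝ³ ≅ ℂ × ℝ valued map. -/
def pdv2 (f : ℂ → ℂ × ℝ) (z : ℂ) : ℂ × ℝ := fderiv ℝ f z Complex.I
/-- Euclidean inner product on ℝ³ ≅ ℂ × ℝ. -/
def inn3 (p q : ℂ × ℝ) : ℝ := inn p.1 q.1 + p.2 * q.2

/-!
The map `Y` is `σ ∘ g`, where `σ w = (2w, 1 - |w|²) / (1 + |w|²)` is the inverse stereographic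
projection. By the chain rule and `ℝ`-linearity of `dσ`, `h,₁ Y,₁ + h,₂ Y,₂ = dσ_g (g' ∇h)`, and
`dσ_w u = (2u/T - 4⟨w,u⟩ w/T², -4⟨w,u⟩/T²)` with `T = 1 + |w|²`. Since
`⟨g, g' ∇h⟩ = |g'|² ⟨∇h, g/g'⟩`, dividing by `L = 4|g'|²/T²` gives the formula.
-/

open scoped InnerProductSpace ComplexConjugate

theorem inn_eq_inner (w u : ℂ) : inn w u = ⟪w, u⟫_ℝ := by
  rw [inn, Complex.inner, mul_comm]

theorem inn_mul_eq_norm_sq_mul_inn_div (w a u : ℂ) (ha : a ≠ 0) :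
    inn w (a * u) = ‖a‖ ^ 2 * inn u (w / a) := by
  calc inn w (a * u) = (conj (conj w * (a * u))).re := (Complex.conj_re _).symm
    _ = (((‖a‖ ^ 2 : ℝ) : ℂ) * (conj u * (w / a))).re := by
      rw [← Complex.normSq_eq_norm_sq, ← Complex.mul_conj]
      field_simp
      simp only [map_mul, Complex.conj_conj]
      congr 1
      ring
    _ = ‖a‖ ^ 2 * inn u (w / a) := Complex.re_ofReal_mul _ _

def invStereo (w : ℂ) : ℂ × ℝ :=
  ((2 / (1 + ‖w‖ ^ 2)) • w, (1 - ‖w‖ ^ 2) / (1 + ‖w‖ ^ 2))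

theorem invStereo_eq (w : ℂ) : invStereo w =
    (2 * w / ((1 + ‖w‖ ^ 2 : ℝ) : ℂ), (2 - (1 + ‖w‖ ^ 2)) / (1 + ‖w‖ ^ 2)) := by
  refine Prod.ext ?_ ?_
  · simp only [invStereo, Complex.real_smul, Complex.ofReal_div, Complex.ofReal_ofNat]
    ring
  · simp only [invStereo]
    ring

theorem exists_hasFDerivAt_invStereo (w : ℂ) : ∃ D : ℂ →L[ℝ] ℂ × ℝ, HasFDerivAt invStereo D w ∧
    ∀ u, D u = ((2 / (1 + ‖w‖ ^ 2)) • u - (4 * inn w u / (1 + ‖w‖ ^ 2) ^ 2) • w,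
      -4 * inn w u / (1 + ‖w‖ ^ 2) ^ 2) := by
  have hs : HasFDerivAt (fun w : ℂ => 1 + ‖w‖ ^ 2) (2 • innerSL ℝ w) w := by
    simpa using ((hasFDerivAt_id w).norm_sq).const_add 1
  have hinv := (hasFDerivAt_inv (by positivity : 1 + ‖w‖ ^ 2 ≠ 0)).comp w hs
  have h1 := (hinv.const_mul 2).smul (hasFDerivAt_id w)
  have h2 := ((hasFDerivAt_id w).norm_sq.const_sub 1).mul hinv
  have heq : invStereo =
      fun w => ((2 * (1 + ‖w‖ ^ 2)⁻¹) • w, (1 - ‖w‖ ^ 2) * (1 + ‖w‖ ^ 2)⁻¹) := by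
    funext v; simp only [invStereo, div_eq_mul_inv]
  refine ⟨_, heq ▸ h1.prodMk h2, fun u => ?_⟩
  simp only [Function.comp_apply, ContinuousLinearMap.prod_apply, add_apply, smul_apply,
    ContinuousLinearMap.comp_apply, ContinuousLinearMap.id_apply, neg_apply,
    ContinuousLinearMap.smulRight_apply, ContinuousLinearMap.toSpanSingleton_apply,
    coe_innerSL_apply, id_eq, inn_eq_inner, smul_eq_mul]
  refine Prod.ext ?_ ?_
  · module
  · field_simp
    ring

theorem differentiableAt_invStereo (w : ℂ) : DifferentiableAt ℝ invStereo w :=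
  let ⟨_, hD, _⟩ := exists_hasFDerivAt_invStereo w; hD.differentiableAt

theorem fderiv_invStereo_apply (w u : ℂ) : fderiv ℝ invStereo w u =
    ((2 / (1 + ‖w‖ ^ 2)) • u - (4 * inn w u / (1 + ‖w‖ ^ 2) ^ 2) • w,
      -4 * inn w u / (1 + ‖w‖ ^ 2) ^ 2) := by
  obtain ⟨D, hD, hDu⟩ := exists_hasFDerivAt_invStereo w
  rw [hD.fderiv, hDu]

theorem fderiv_invStereo_comp_apply {g : ℂ → ℂ} {a z : ℂ} (hg : HasDerivAt g a z) (v : ℂ) :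
    fderiv ℝ (invStereo ∘ g) z v = fderiv ℝ invStereo (g z) (a * v) := by
  rw [fderiv_comp z (differentiableAt_invStereo _) (hg.differentiableAt.restrictScalars ℝ),
    ContinuousLinearMap.comp_apply, (hg.hasFDerivAt.restrictScalars ℝ).fderiv,
    ContinuousLinearMap.coe_restrictScalars', ContinuousLinearMap.toSpanSingleton_apply,
    smul_eq_mul, mul_comm]

theorem ContinuousLinearMap.map_mul_ofReal_add_mul_I {E : Type*} [NormedAddCommGroup E]
    [NormedSpace ℝ E] (D : ℂ →L[ℝ] E) (a : ℂ) (p q : ℝ) :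
    D (a * (p + q * Complex.I)) = p • D a + q • D (a * Complex.I) := by
  have : a * (p + q * Complex.I) = p • a + q • (a * Complex.I) := by
    simp only [Complex.real_smul]; ring
  rw [this, map_add, map_smul, map_smul]

theorem inv_smul_fderiv_invStereo_add_smul (w a u : ℂ) (c : ℝ) (ha : a ≠ 0) :
    (4 * ‖a‖ ^ 2 / (1 + ‖w‖ ^ 2) ^ 2)⁻¹ • fderiv ℝ invStereo w (a * u) + c • invStereo w =
      ((((1 + ‖w‖ ^ 2) / 2 : ℝ) : ℂ) * (u / ((‖a‖ ^ 2 : ℝ) : ℂ)) * a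
          - w * ((inn u (w / a) : ℝ) : ℂ) + ((2 * c / (1 + ‖w‖ ^ 2) : ℝ) : ℂ) * w,
        ((2 - (1 + ‖w‖ ^ 2)) / (1 + ‖w‖ ^ 2)) * c - inn u (w / a)) := by
  have hs : 1 + ‖w‖ ^ 2 ≠ 0 := by positivity
  rw [fderiv_invStereo_apply, inn_mul_eq_norm_sq_mul_inn_div w a u ha, invStereo_eq]
  refine Prod.ext ?_ ?_
  · simp only [Prod.fst_add, Prod.smul_fst, Complex.real_smul, Complex.ofReal_div,
      Complex.ofReal_mul, Complex.ofReal_inv, Complex.ofReal_pow, Complex.ofReal_add,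
      Complex.ofReal_one, Complex.ofReal_ofNat]
    have ha' : ((‖a‖ : ℝ) : ℂ) ≠ 0 := by exact_mod_cast norm_ne_zero_iff.mpr ha
    have hs' : 1 + ((‖w‖ : ℝ) : ℂ) ^ 2 ≠ 0 := by exact_mod_cast hs
    field_simp
    ring
  · simp only [Prod.snd_add, Prod.smul_snd, smul_eq_mul]
    field_simp
    ring

theorem stmt_6_general (U : Set ℂ)
    (g g' : ℂ → ℂ) (hg : ∀ z ∈ U, HasDerivAt g (g' z) z) (hg' : ∀ z ∈ U, g' z ≠ 0)
    (h : ℂ → ℝ) :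
    let T : ℂ → ℝ := fun w => 1 + ‖g w‖ ^ 2
    let L : ℂ → ℝ := fun w => 4 * ‖g' w‖ ^ 2 / (T w) ^ 2
    let Y : ℂ → ℂ × ℝ := fun w => (2 * g w / ((T w : ℝ) : ℂ), (2 - T w) / T w)
    let η : ℂ → ℂ × ℝ := fun w =>
      (pd1 h w / L w) • pdv1 Y w + (pd2 h w / L w) • pdv2 Y w + h w • Y w
    let gradh : ℂ → ℂ := fun w => (pd1 h w : ℂ) + (pd2 h w : ℂ) * Complex.I
    ∀ z ∈ U,
      η z = (((T z / 2 : ℝ) : ℂ) * (gradh z / ((‖g' z‖ ^ 2 : ℝ) : ℂ)) * g' z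
               - g z * ((inn (gradh z) (g z / g' z) : ℝ) : ℂ)
               + ((2 * h z / T z : ℝ) : ℂ) * g z,
             ((2 - T z) / T z) * h z - inn (gradh z) (g z / g' z)) := by
  intro T L Y η gradh z hz
  have hY : Y = invStereo ∘ g := funext fun w => (invStereo_eq (g w)).symm
  have hη : η z =
      (L z)⁻¹ • fderiv ℝ invStereo (g z) (g' z * gradh z) + h z • invStereo (g z) := by
    simp only [η, gradh, pdv1, pdv2, hY, Function.comp_apply, fderiv_invStereo_comp_apply (hg z hz),
      ContinuousLinearMap.map_mul_ofReal_add_mul_I, mul_one, smul_add, smul_smul, div_eq_inv_mul]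
  rw [hη]
  exact inv_smul_fderiv_invStereo_add_smul (g z) (g' z) (gradh z) (h z) (hg' z hz)

/-- explicit formula for η = ∇_L h + hY (equation (eta WR) of the paper). -/
theorem stmt_6 (U : Set ℂ) (hU : IsOpen U)
    (g g' : ℂ → ℂ) (hg : ∀ z ∈ U, HasDerivAt g (g' z) z) (hg' : ∀ z ∈ U, g' z ≠ 0)
    (h : ℂ → ℝ) (hh : ContDiffOn ℝ 1 h U) :
    let T : ℂ → ℝ := fun w => 1 + ‖g w‖ ^ 2
    let L : ℂ → ℝ := fun w => 4 * ‖g' w‖ ^ 2 / (T w) ^ 2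
    let Y : ℂ → ℂ × ℝ := fun w => (2 * g w / ((T w : ℝ) : ℂ), (2 - T w) / T w)
    let η : ℂ → ℂ × ℝ := fun w =>
      (pd1 h w / L w) • pdv1 Y w + (pd2 h w / L w) • pdv2 Y w + h w • Y w
    let gradh : ℂ → ℂ := fun w => (pd1 h w : ℂ) + (pd2 h w : ℂ) * Complex.I
    ∀ z ∈ U,
      η z = (((T z / 2 : ℝ) : ℂ) * (gradh z / ((‖g' z‖ ^ 2 : ℝ) : ℂ)) * g' z
               - g z * ((inn (gradh z) (g z / g' z) : ℝ) : ℂ)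
               + ((2 * h z / T z : ℝ) : ℂ) * g z,
             ((2 - T z) / T z) * h z - inn (gradh z) (g z / g' z)) :=
  stmt_6_general U g g' hg hg' h
end
end

section
/- For any real constants a₂, a₃, c₁, c₂, the function h : ℝ² → ℝ defined by h(u,v) = ( a₂ + c₁ u + e^{2u}( a₃ + c₂ u ) ) / ( 1 + e^{2u} ) satisfies the generalized Helmholtz equation Δ[ ( (1+e^{2u})² / (4 e^{2u}) ) Δh + 2h ] = 0, where Δ denotes the Euclidean Laplacian in the coordinates (u,v). -/
/-!
Write `σ(u) = e^{2u}/(1+e^{2u}) = (1 + tanh u)/2`. Then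
`h = a₂ + c₁u + σ(u)((a₃ - a₂) + (c₂ - c₁)u)` and the weight `(1+e^{2u})²/(4e^{2u})` is
`1/(4σ(1-σ))`. Since `σ` solves the logistic equation `σ' = 2σ(1-σ)`, the operator
`f ↦ f''/(4σ(1-σ)) + 2f` sends `σ` to `1` and `uσ` to `1 + u`, so it maps `h` to an affine
function of `u`. For functions of `u = Re z` alone the Laplacian is the second derivative, and it
kills affine functions.
-/

open Complex

noncomputable section

lemma hasDerivAt_affine (p q u : ℝ) : HasDerivAt (fun u => p + q * u) q u :=
  (((hasDerivAt_id u).const_mul q).const_add p).congr_deriv (mul_one q)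

section ReProfile

variable {F F' F'' : ℝ → ℝ}

lemma hasFDerivAt_comp_re (hF : ∀ u, HasDerivAt F (F' u) u) (z : ℂ) :
    HasFDerivAt (fun w : ℂ => F w.re) (((1 : ℝ →L[ℝ] ℝ).smulRight (F' z.re)).comp reCLM) z :=
  (hF z.re).hasFDerivAt.comp z reCLM.hasFDerivAt

lemma pd1_comp_re (hF : ∀ u, HasDerivAt F (F' u) u) (z : ℂ) :
    pd1 (fun w : ℂ => F w.re) z = F' z.re := by
  simp [pd1, (hasFDerivAt_comp_re hF z).fderiv]

lemma pd2_comp_re (hF : ∀ u, HasDerivAt F (F' u) u) (z : ℂ) :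
    pd2 (fun w : ℂ => F w.re) z = 0 := by
  simp [pd2, (hasFDerivAt_comp_re hF z).fderiv]

lemma lap_comp_re (hF : ∀ u, HasDerivAt F (F' u) u) (hF' : ∀ u, HasDerivAt F' (F'' u) u)
    (z : ℂ) : lap (fun w : ℂ => F w.re) z = F'' z.re := by
  have hpd2 : pd2 (fun w : ℂ => F w.re) = fun _ => 0 := funext (pd2_comp_re hF)
  rw [lap, funext (pd1_comp_re hF), pd1_comp_re hF', hpd2]
  simp [pd2]

lemma lap_affine_comp_re (A B : ℝ) (z : ℂ) : lap (fun w : ℂ => A + B * w.re) z = 0 :=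
  lap_comp_re (F := fun u => A + B * u) (F' := fun _ => B)
    (hasDerivAt_affine A B)
    (fun u => hasDerivAt_const u B) z

end ReProfile

def logistic (u : ℝ) : ℝ := Real.exp (2 * u) / (1 + Real.exp (2 * u))

lemma hasDerivAt_logistic (u : ℝ) :
    HasDerivAt logistic (2 * logistic u * (1 - logistic u)) u := by
  have hexp : HasDerivAt (fun u => Real.exp (2 * u)) (Real.exp (2 * u) * 2) u := by
    simpa using ((hasDerivAt_id u).const_mul 2).exp
  have hden : 1 + Real.exp (2 * u) ≠ 0 := by positivity
  refine (hexp.div (hexp.const_add 1) hden).congr_deriv ?_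
  simp only [logistic]
  field_simp

lemma hasDerivAt_logistic_mul_one_sub (u : ℝ) :
    HasDerivAt (fun u => 2 * logistic u * (1 - logistic u))
      (4 * logistic u * (1 - logistic u) * (1 - 2 * logistic u)) u := by
  have hσ := hasDerivAt_logistic u
  refine ((hσ.const_mul 2).mul (hσ.const_sub 1)).congr_deriv ?_
  ring

lemma sq_one_add_exp_div_mul_logistic (u : ℝ) :
    (1 + Real.exp (2 * u)) ^ 2 / (4 * Real.exp (2 * u)) * (4 * logistic u * (1 - logistic u))
      = 1 := by
  have hden : 1 + Real.exp (2 * u) ≠ 0 := by positivity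
  have hexp : Real.exp (2 * u) ≠ 0 := by positivity
  simp only [logistic]
  field_simp
  ring

section LogisticProfile

variable (a b c d : ℝ)

lemma hasDerivAt_logisticProfile (u : ℝ) :
    HasDerivAt (fun u => a + b * u + logistic u * (c + d * u))
      (b + 2 * logistic u * (1 - logistic u) * (c + d * u) + logistic u * d) u := by
  refine ((hasDerivAt_affine a b u).add
    ((hasDerivAt_logistic u).mul (hasDerivAt_affine c d u))).congr_deriv ?_
  ring

lemma hasDerivAt_logisticProfile_deriv (u : ℝ) :
    HasDerivAt (fun u => b + 2 * logistic u * (1 - logistic u) * (c + d * u) + logistic u * d)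
      (4 * logistic u * (1 - logistic u) * ((1 - 2 * logistic u) * (c + d * u) + d)) u := by
  refine ((((hasDerivAt_logistic_mul_one_sub u).mul (hasDerivAt_affine c d u)).const_add b).add
    ((hasDerivAt_logistic u).mul_const d)).congr_deriv ?_
  ring

lemma logisticProfile_helmholtz (u : ℝ) :
    (1 + Real.exp (2 * u)) ^ 2 / (4 * Real.exp (2 * u)) *
        (4 * logistic u * (1 - logistic u) * ((1 - 2 * logistic u) * (c + d * u) + d))
      + 2 * (a + b * u + logistic u * (c + d * u))
      = (2 * a + c + d) + (2 * b + d) * u := by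
  calc _ = (1 + Real.exp (2 * u)) ^ 2 / (4 * Real.exp (2 * u)) *
          (4 * logistic u * (1 - logistic u)) * ((1 - 2 * logistic u) * (c + d * u) + d)
        + 2 * (a + b * u + logistic u * (c + d * u)) := by ring
    _ = _ := by rw [sq_one_add_exp_div_mul_logistic]; ring

end LogisticProfile

lemma div_one_add_exp_eq_logisticProfile (a₂ a₃ c₁ c₂ u : ℝ) :
    (a₂ + c₁ * u + Real.exp (2 * u) * (a₃ + c₂ * u)) / (1 + Real.exp (2 * u))
      = a₂ + c₁ * u + logistic u * ((a₃ - a₂) + (c₂ - c₁) * u) := by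
  have hden : 1 + Real.exp (2 * u) ≠ 0 := by positivity
  simp only [logistic]
  field_simp
  ring

/-- h(u,v) = (a₂ + c₁u + e^{2u}(a₃ + c₂u))/(1+e^{2u}) solves the
generalized Helmholtz equation Δ[((1+e^{2u})²/(4e^{2u})) Δh + 2h] = 0. -/
theorem stmt_9 (a₂ a₃ c₁ c₂ : ℝ) :
    let h : ℂ → ℝ := fun z =>
      (a₂ + c₁ * z.re + Real.exp (2 * z.re) * (a₃ + c₂ * z.re)) / (1 + Real.exp (2 * z.re))
    ∀ z : ℂ,
      lap (fun w =>
        ((1 + Real.exp (2 * w.re)) ^ 2 / (4 * Real.exp (2 * w.re))) * lap h w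
          + 2 * h w) z = 0 := by
  intro h z
  have hprofile : h = fun w => a₂ + c₁ * w.re + logistic w.re * ((a₃ - a₂) + (c₂ - c₁) * w.re) :=
    funext fun w => div_one_add_exp_eq_logisticProfile a₂ a₃ c₁ c₂ w.re
  have hlap (w : ℂ) : lap h w = 4 * logistic w.re * (1 - logistic w.re) *
      ((1 - 2 * logistic w.re) * ((a₃ - a₂) + (c₂ - c₁) * w.re) + (c₂ - c₁)) := by
    rw [hprofile]
    exact lap_comp_re (hasDerivAt_logisticProfile _ _ _ _)
      (hasDerivAt_logisticProfile_deriv _ _ _) w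
  have hG : (fun w => ((1 + Real.exp (2 * w.re)) ^ 2 / (4 * Real.exp (2 * w.re))) * lap h w
      + 2 * h w) = fun w => (a₂ + a₃ + c₂ - c₁) + (c₁ + c₂) * w.re := by
    funext w
    rw [hlap, hprofile, logisticProfile_helmholtz]
    ring
  rw [hG]
  exact lap_affine_comp_re _ _ z
end
end
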